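/- For ξ ∈ V define the Jacobi bilinear form J_ξ on V by J_ξ(η₁,η₂) := B⁰(ξ,η₁,η₂,ξ). If a(ξ) = 0 then J_ξ has rank at most 1, and if a(ξ) ≠ 0 then J_ξ has rank at least 2. Consequently, rank(J_ξ) ≤ 1 if and only if a(ξ) = 0. -/
import Mathlib

inductive Idx (p : ℕ) : Type where
  | X : Idx p
  | Y : Idx p
  | Z : Fin p → Idx p
  | Yt : Idx p
  | Zt : Fin p → Idx p
  deriving DecidableEq, Fintype

abbrev V (p : ℕ) : Type := Idx p → ℝ

noncomputable def e (p : ℕ) (a : Idx p) : V p := fun b => if b = a then 1 else 0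

noncomputable def T (p k : ℕ) (a b : V p) (η : Fin k → V p) : ℝ :=
  if hk : 1 ≤ k ∧ k ≤ p then
    (a (Idx.Z ⟨k - 1, by omega⟩) * b Idx.Y + a Idx.Y * b (Idx.Z ⟨k - 1, by omega⟩)) *
        ∏ j, η j Idx.Y +
      a Idx.Y * b Idx.Y *
        ∑ j, η j (Idx.Z ⟨k - 1, by omega⟩) * ∏ l ∈ Finset.univ.erase j, η l Idx.Y
  else if k = 0 then
    a Idx.Y * b Idx.Yt + b Idx.Y * a Idx.Yt +
      ∑ i : Fin p, (a (Idx.Z i) * b (Idx.Zt i) + b (Idx.Z i) * a (Idx.Zt i))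
  else a Idx.Y * b Idx.Y * ∏ j, η j Idx.Y

noncomputable def Bc (p k : ℕ) (u v w x : V p) (η : Fin k → V p) : ℝ :=
  u Idx.X * x Idx.X * T p k v w η - u Idx.X * w Idx.X * T p k v x η -
    v Idx.X * x Idx.X * T p k u w η + v Idx.X * w Idx.X * T p k u x η

def GA (p k : ℕ) (g : V p ≃ₗ[ℝ] V p) : Prop :=
  ∀ i, i ≤ k → ∀ u v w x : V p, ∀ η : Fin i → V p,
    Bc p i (g u) (g v) (g w) (g x) (fun j => g (η j)) = Bc p i u v w x η

noncomputable def Jmat (p : ℕ) (ξ : V p) : Matrix (Idx p) (Idx p) ℝ :=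
  Matrix.of fun a b : Idx p => Bc p 0 ξ (e p a) (e p b) ξ Fin.elim0

lemma T0_apply (p : ℕ) (a b : V p) (η : Fin 0 → V p) :
    T p 0 a b η = a Idx.Y * b Idx.Yt + b Idx.Y * a Idx.Yt +
      ∑ i : Fin p, (a (Idx.Z i) * b (Idx.Zt i) + b (Idx.Z i) * a (Idx.Zt i)) := by
  simp [T]

lemma JYY (p : ℕ) (ξ : V p) : Jmat p ξ Idx.Y Idx.Y = 0 := by
  simp [Jmat, Bc, T0_apply, e]

lemma JYtYt (p : ℕ) (ξ : V p) : Jmat p ξ Idx.Yt Idx.Yt = 0 := by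
  simp [Jmat, Bc, T0_apply, e]

lemma JYYt (p : ℕ) (ξ : V p) : Jmat p ξ Idx.Y Idx.Yt = ξ Idx.X * ξ Idx.X := by
  simp [Jmat, Bc, T0_apply, e]

lemma JYtY (p : ℕ) (ξ : V p) : Jmat p ξ Idx.Yt Idx.Y = ξ Idx.X * ξ Idx.X := by
  simp [Jmat, Bc, T0_apply, e]

/-- if `a(ξ) = 0` then the Jacobi form `J_ξ` has rank at most 1; if
`a(ξ) ≠ 0` then `J_ξ` has rank at least 2; consequently `rank J_ξ ≤ 1 ↔ a(ξ) = 0`. -/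
theorem statement3 (p : ℕ) (hp : 1 ≤ p) (ξ : V p) :
    (ξ Idx.X = 0 → (Jmat p ξ).rank ≤ 1) ∧
    (ξ Idx.X ≠ 0 → 2 ≤ (Jmat p ξ).rank) ∧
    ((Jmat p ξ).rank ≤ 1 ↔ ξ Idx.X = 0) := by
  have h1 : ξ Idx.X = 0 → (Jmat p ξ).rank ≤ 1 := by
    intro h
    set A : Matrix (Idx p) Unit ℝ :=
      Matrix.of fun a _ => e p a Idx.X * T p 0 ξ ξ Fin.elim0 with hA
    set B : Matrix Unit (Idx p) ℝ := Matrix.of fun _ b => e p b Idx.X with hB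
    have hJ : Jmat p ξ = A * B := by
      ext a b
      simp [Jmat, Bc, Matrix.mul_apply, hA, hB, h]; ring
    rw [hJ]
    calc (A * B).rank ≤ A.rank := Matrix.rank_mul_le_left A B
      _ ≤ Fintype.card Unit := Matrix.rank_le_card_width A
      _ = 1 := by simp
  have h2 : ξ Idx.X ≠ 0 → 2 ≤ (Jmat p ξ).rank := by
    intro h
    set f : Fin 2 → Idx p := ![Idx.Y, Idx.Yt] with hf
    set C : Matrix (Fin 2) (Idx p) ℝ :=
      Matrix.of fun i a => if a = f i then 1 else 0 with hC
    set R : Matrix (Idx p) (Fin 2) ℝ :=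
      Matrix.of fun a j => if a = f j then 1 else 0 with hR
    have hM : ∀ i j, (C * Jmat p ξ * R) i j = Jmat p ξ (f i) (f j) := by
      intro i j
      simp [Matrix.mul_apply, hC, hR, ite_mul, mul_ite, Finset.sum_ite_eq,
        Finset.sum_ite_eq']
    have hdet : IsUnit (C * Jmat p ξ * R).det := by
      rw [Matrix.det_fin_two, hM, hM, hM, hM]
      simp only [hf, Matrix.cons_val_zero, Matrix.cons_val_one, Matrix.head_cons,
        JYY, JYtYt, JYYt, JYtY]
      simp [isUnit_iff_ne_zero, h]
    have hrank2 : (C * Jmat p ξ * R).rank = 2 := by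
      rw [Matrix.rank_of_isUnit _ ((Matrix.isUnit_iff_isUnit_det _).mpr hdet)]
      simp
    calc (2 : ℕ) = (C * Jmat p ξ * R).rank := hrank2.symm
      _ ≤ (C * Jmat p ξ).rank := Matrix.rank_mul_le_left _ _
      _ ≤ (Jmat p ξ).rank := Matrix.rank_mul_le_right _ _
  refine ⟨h1, h2, ⟨fun hr => ?_, h1⟩⟩
  by_contra hx
  have := h2 hx
  omega
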